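/- For all integers k ≥ 1 and n ≥ 4, γ_{[k]R}(C_7 □ P_n) ≤ 7(n−2)·⌈(k+4)/5⌉ + 14·⌈(k+3−⌈(k+4)/5⌉)/3⌉. -/
import Mathlib


open scoped Classical

/-- The cylindrical grid `C_m □ P_n`: the Cartesian (box) product of the
cycle on `m` vertices with the path on `n` vertices. -/
def cylinder (m n : ℕ) : SimpleGraph (Fin m × Fin n) :=
  (SimpleGraph.cycleGraph m).boxProd (SimpleGraph.pathGraph n)

/-- Sum of `f` over the closed neighborhood of `v`. -/
noncomputable def nbhdSum {V : Type*} [Fintype V] (G : SimpleGraph V) (f : V → ℕ) (v : V) : ℕ :=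
  ∑ u ∈ Finset.univ.filter (fun u => G.Adj v u ∨ u = v), f u

/-- The number of active neighbors of `v`, i.e. neighbors with positive label. -/
noncomputable def anCard {V : Type*} [Fintype V] (G : SimpleGraph V) (f : V → ℕ) (v : V) : ℕ :=
  (Finset.univ.filter (fun u => G.Adj v u ∧ 0 < f u)).card

/-- `f : V → {0,…,k+1}` is a `[k]`-Roman dominating function on `G`. -/
def IsKRDF {V : Type*} [Fintype V] (k : ℕ) (G : SimpleGraph V) (f : V → ℕ) : Prop :=
  (∀ v, f v ≤ k + 1) ∧ ∀ v, f v < k → k + anCard G f v ≤ nbhdSum G f v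

/-- The `[k]`-Roman domination number: the minimum weight of a `[k]`-RDF. -/
noncomputable def gammaKR {V : Type*} [Fintype V] (k : ℕ) (G : SimpleGraph V) : ℕ :=
  sInf {w | ∃ f : V → ℕ, IsKRDF k G f ∧ w = ∑ v, f v}

/- ## Auxiliary lemmas -/

lemma cyc7_adj : ∀ i : Fin 7,
    (SimpleGraph.cycleGraph 7).Adj i (i+1) ∧ (SimpleGraph.cycleGraph 7).Adj i (i-1) := by decide

lemma cyc7_adj_iff : ∀ i x : Fin 7, (SimpleGraph.cycleGraph 7).Adj i x → x = i+1 ∨ x = i-1 := by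
  decide

lemma fin7_ne : ∀ i : Fin 7, i+1 ≠ i ∧ i-1 ≠ i ∧ i+1 ≠ i-1 := by decide

lemma cylinder_adj {m n : ℕ} {x y : Fin m × Fin n} :
    (cylinder m n).Adj x y ↔ ((SimpleGraph.cycleGraph m).Adj x.1 y.1 ∧ x.2 = y.2) ∨
      ((SimpleGraph.pathGraph n).Adj x.2 y.2 ∧ x.1 = y.1) := Iff.rfl

lemma nbhdSum_ge {V : Type*} [Fintype V] (G : SimpleGraph V) (f : V → ℕ) (v : V)
    (S : Finset V) (h : ∀ u ∈ S, G.Adj v u ∨ u = v) : ∑ u ∈ S, f u ≤ nbhdSum G f v :=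
  Finset.sum_le_sum_of_subset (fun u hu => Finset.mem_filter.mpr ⟨Finset.mem_univ u, h u hu⟩)

lemma anCard_le {V : Type*} [Fintype V] (G : SimpleGraph V) (f : V → ℕ) (v : V)
    (T : Finset V) (h : ∀ u, G.Adj v u → u ∈ T) : anCard G f v ≤ T.card :=
  Finset.card_le_card (fun u hu => h u (Finset.mem_filter.mp hu).2.1)

lemma card3 {α : Type*} [DecidableEq α] (x y z : α) : ({x,y,z} : Finset α).card ≤ 3 := by
  calc ({x,y,z} : Finset α).card ≤ ({y,z} : Finset α).card + 1 := Finset.card_insert_le _ _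
    _ ≤ (({z} : Finset α).card + 1) + 1 := by
        exact Nat.add_le_add_right (Finset.card_insert_le _ _) 1
    _ ≤ 3 := by simp

lemma card4 {α : Type*} [DecidableEq α] (x y z w : α) : ({x,y,z,w} : Finset α).card ≤ 4 := by
  calc ({x,y,z,w} : Finset α).card ≤ ({y,z,w} : Finset α).card + 1 := Finset.card_insert_le _ _
    _ ≤ 4 := Nat.add_le_add_right (card3 y z w) 1

lemma sum4 {α : Type*} [DecidableEq α] (f : α → ℕ) {x y z w : α}
    (h1 : x ≠ y) (h2 : x ≠ z) (h3 : x ≠ w) (h4 : y ≠ z) (h5 : y ≠ w) (h6 : z ≠ w) :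
    ∑ u ∈ ({x,y,z,w} : Finset α), f u = f x + f y + f z + f w := by
  rw [Finset.sum_insert (by simp [h1, h2, h3]), Finset.sum_insert (by simp [h4, h5]),
    Finset.sum_insert (by simp [h6]), Finset.sum_singleton]
  ring

lemma sum5 {α : Type*} [DecidableEq α] (f : α → ℕ) {x y z w t : α}
    (h1 : x ≠ y) (h2 : x ≠ z) (h3 : x ≠ w) (h4 : x ≠ t) (h5 : y ≠ z) (h6 : y ≠ w)
    (h7 : y ≠ t) (h8 : z ≠ w) (h9 : z ≠ t) (h10 : w ≠ t) :
    ∑ u ∈ ({x,y,z,w,t} : Finset α), f u = f x + f y + f z + f w + f t := by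
  rw [Finset.sum_insert (by simp [h1, h2, h3, h4]), sum4 f h5 h6 h7 h8 h9 h10]
  ring

lemma pne1 {n : ℕ} {x y : Fin 7} {u v : Fin n} (h : x ≠ y) : (x,u) ≠ (y,v) :=
  fun hh => h (congrArg Prod.fst hh)

lemma pne2 {n : ℕ} {x y : Fin 7} {u v : Fin n} (h : u ≠ v) : (x,u) ≠ (y,v) :=
  fun hh => h (congrArg Prod.snd hh)

theorem stmt13 (k n : ℕ) (hk : 1 ≤ k) (hn : 4 ≤ n) :
    gammaKR k (cylinder 7 n) ≤ 7 * (n - 2) * ((k + 4) ⌈/⌉ 5) + 14 * ((k + 3 - ((k + 4) ⌈/⌉ 5)) ⌈/⌉ 3) := by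
  set a := (k + 4) ⌈/⌉ 5 with hadef
  set b := (k + 3 - a) ⌈/⌉ 3 with hbdef
  obtain ⟨ha1, hb1, hab, ha2, hb2, hapos, hbpos⟩ :
      k + 4 ≤ 5*a ∧ k + 3 ≤ 3*b + a ∧ k + 4 ≤ 4*a + b ∧ a ≤ k+1 ∧ b ≤ k+1 ∧ 1 ≤ a ∧ 1 ≤ b := by
    rw [hbdef, hadef]
    simp only [Nat.ceilDiv_eq_add_pred_div]
    omega
  set f : Fin 7 × Fin n → ℕ := fun p => if p.2.val = 0 ∨ p.2.val = n - 1 then b else a with hf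
  -- values of f
  have hfval : ∀ (i : Fin 7) (j : Fin n), f (i, j) = if j.val = 0 ∨ j.val = n - 1 then b else a :=
    fun i j => rfl
  -- condition 1
  have hcond1 : ∀ v, f v ≤ k + 1 := by
    rintro ⟨i, j⟩
    rw [hfval]
    split_ifs <;> omega
  -- condition 2
  have hcond2 : ∀ v, f v < k → k + anCard (cylinder 7 n) f v ≤ nbhdSum (cylinder 7 n) f v := by
    rintro ⟨i, j⟩ hv
    obtain ⟨hi1, hi2, hi3⟩ := fin7_ne i
    rcases eq_or_ne j.val 0 with hj0 | hj0
    · -- left boundary column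
      set j1 : Fin n := ⟨1, by omega⟩ with hj1
      have hj1v : (j1 : Fin n).val = 1 := rfl
      have hpadj : (SimpleGraph.pathGraph n).Adj j j1 :=
        SimpleGraph.pathGraph_adj.mpr (Or.inl (by omega))
      have hjne : j ≠ j1 := Fin.ne_of_val_ne (by omega)
      have hT : ∀ u, (cylinder 7 n).Adj (i, j) u →
          u ∈ ({(i+1, j), (i-1, j), (i, j1)} : Finset (Fin 7 × Fin n)) := by
        rintro ⟨x, y⟩ hadj
        rcases cylinder_adj.mp hadj with ⟨hc, he⟩ | ⟨hp, he⟩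
        · simp only at he; subst he
          rcases cyc7_adj_iff i x hc with rfl | rfl <;> simp
        · simp only at he; subst he
          rw [SimpleGraph.pathGraph_adj] at hp
          replace hp : j.val + 1 = y.val ∨ y.val + 1 = j.val := hp
          have hy : y = j1 := Fin.ext (by omega)
          subst hy; simp
      have han : anCard (cylinder 7 n) f (i, j) ≤ 3 :=
        le_trans (anCard_le _ _ _ _ hT) (card3 _ _ _)
      have hS : ∑ u ∈ ({(i,j), (i+1,j), (i-1,j), (i,j1)} : Finset (Fin 7 × Fin n)), f u ≤
          nbhdSum (cylinder 7 n) f (i, j) := by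
        apply nbhdSum_ge
        rintro u hu
        simp only [Finset.mem_insert, Finset.mem_singleton] at hu
        rcases hu with rfl | rfl | rfl | rfl
        · right; rfl
        · left; exact cylinder_adj.mpr (Or.inl ⟨(cyc7_adj i).1, rfl⟩)
        · left; exact cylinder_adj.mpr (Or.inl ⟨(cyc7_adj i).2, rfl⟩)
        · left; exact cylinder_adj.mpr (Or.inr ⟨hpadj, rfl⟩)
      rw [sum4 f (pne1 hi1.symm) (pne1 hi2.symm) (pne2 hjne) (pne1 hi3) (pne2 hjne)
        (pne2 hjne)] at hS
      have e0 : f (i, j) = b := by rw [hfval, if_pos (Or.inl hj0)]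
      have e1 : f (i+1, j) = b := by rw [hfval, if_pos (Or.inl hj0)]
      have e2 : f (i-1, j) = b := by rw [hfval, if_pos (Or.inl hj0)]
      have e3 : f (i, j1) = a := by rw [hfval, if_neg (by omega)]
      rw [e0, e3] at hS
      omega
    · rcases eq_or_ne j.val (n-1) with hjn | hjn
      · -- right boundary column
        set j1 : Fin n := ⟨n-2, by omega⟩ with hj1
        have hj1v : (j1 : Fin n).val = n-2 := rfl
        have hpadj : (SimpleGraph.pathGraph n).Adj j j1 :=
          SimpleGraph.pathGraph_adj.mpr (Or.inr (by omega))
        have hjne : j ≠ j1 := Fin.ne_of_val_ne (by omega)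
        have hT : ∀ u, (cylinder 7 n).Adj (i, j) u →
            u ∈ ({(i+1, j), (i-1, j), (i, j1)} : Finset (Fin 7 × Fin n)) := by
          rintro ⟨x, y⟩ hadj
          rcases cylinder_adj.mp hadj with ⟨hc, he⟩ | ⟨hp, he⟩
          · simp only at he; subst he
            rcases cyc7_adj_iff i x hc with rfl | rfl <;> simp
          · simp only at he; subst he
            rw [SimpleGraph.pathGraph_adj] at hp
            replace hp : j.val + 1 = y.val ∨ y.val + 1 = j.val := hp
            have hy : y = j1 := Fin.ext (by have := y.isLt; omega)
            subst hy; simp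
        have han : anCard (cylinder 7 n) f (i, j) ≤ 3 :=
          le_trans (anCard_le _ _ _ _ hT) (card3 _ _ _)
        have hS : ∑ u ∈ ({(i,j), (i+1,j), (i-1,j), (i,j1)} : Finset (Fin 7 × Fin n)), f u ≤
            nbhdSum (cylinder 7 n) f (i, j) := by
          apply nbhdSum_ge
          rintro u hu
          simp only [Finset.mem_insert, Finset.mem_singleton] at hu
          rcases hu with rfl | rfl | rfl | rfl
          · right; rfl
          · left; exact cylinder_adj.mpr (Or.inl ⟨(cyc7_adj i).1, rfl⟩)
          · left; exact cylinder_adj.mpr (Or.inl ⟨(cyc7_adj i).2, rfl⟩)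
          · left; exact cylinder_adj.mpr (Or.inr ⟨hpadj, rfl⟩)
        rw [sum4 f (pne1 hi1.symm) (pne1 hi2.symm) (pne2 hjne) (pne1 hi3) (pne2 hjne)
          (pne2 hjne)] at hS
        have e0 : f (i, j) = b := by rw [hfval, if_pos (Or.inr hjn)]
        have e1 : f (i+1, j) = b := by rw [hfval, if_pos (Or.inr hjn)]
        have e2 : f (i-1, j) = b := by rw [hfval, if_pos (Or.inr hjn)]
        have e3 : f (i, j1) = a := by rw [hfval, if_neg (by omega)]
        rw [e0, e3] at hS
        omega
      · -- interior column
        have hjlt := j.isLt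
        have ht1 : 1 ≤ j.val := by omega
        have ht2 : j.val ≤ n - 2 := by omega
        set jm : Fin n := ⟨j.val - 1, by omega⟩ with hjm
        set jp : Fin n := ⟨j.val + 1, by omega⟩ with hjp
        have hjmv : (jm : Fin n).val = j.val - 1 := rfl
        have hjpv : (jp : Fin n).val = j.val + 1 := rfl
        have hpadjm : (SimpleGraph.pathGraph n).Adj j jm :=
          SimpleGraph.pathGraph_adj.mpr (Or.inr (by omega))
        have hpadjp : (SimpleGraph.pathGraph n).Adj j jp :=
          SimpleGraph.pathGraph_adj.mpr (Or.inl (by omega))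
        have hjnem : j ≠ jm := Fin.ne_of_val_ne (by omega)
        have hjnep : j ≠ jp := Fin.ne_of_val_ne (by omega)
        have hjmp : jm ≠ jp := Fin.ne_of_val_ne (by omega)
        have hT : ∀ u, (cylinder 7 n).Adj (i, j) u →
            u ∈ ({(i+1, j), (i-1, j), (i, jm), (i, jp)} : Finset (Fin 7 × Fin n)) := by
          rintro ⟨x, y⟩ hadj
          rcases cylinder_adj.mp hadj with ⟨hc, he⟩ | ⟨hp, he⟩
          · simp only at he; subst he
            rcases cyc7_adj_iff i x hc with rfl | rfl <;> simp
          · simp only at he; subst he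
            rw [SimpleGraph.pathGraph_adj] at hp
            replace hp : j.val + 1 = y.val ∨ y.val + 1 = j.val := hp
            have hy : y = jm ∨ y = jp := by
              rcases hp with hp | hp
              · right; exact Fin.ext (by omega)
              · left; exact Fin.ext (by omega)
            rcases hy with rfl | rfl <;> simp
        have han : anCard (cylinder 7 n) f (i, j) ≤ 4 :=
          le_trans (anCard_le _ _ _ _ hT) (card4 _ _ _ _)
        have hS : ∑ u ∈ ({(i,j), (i+1,j), (i-1,j), (i,jm), (i,jp)} :
            Finset (Fin 7 × Fin n)), f u ≤ nbhdSum (cylinder 7 n) f (i, j) := by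
          apply nbhdSum_ge
          rintro u hu
          simp only [Finset.mem_insert, Finset.mem_singleton] at hu
          rcases hu with rfl | rfl | rfl | rfl | rfl
          · right; rfl
          · left; exact cylinder_adj.mpr (Or.inl ⟨(cyc7_adj i).1, rfl⟩)
          · left; exact cylinder_adj.mpr (Or.inl ⟨(cyc7_adj i).2, rfl⟩)
          · left; exact cylinder_adj.mpr (Or.inr ⟨hpadjm, rfl⟩)
          · left; exact cylinder_adj.mpr (Or.inr ⟨hpadjp, rfl⟩)
        rw [sum5 f (pne1 hi1.symm) (pne1 hi2.symm) (pne2 hjnem) (pne2 hjnep) (pne1 hi3)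
          (pne2 hjnem) (pne2 hjnep) (pne2 hjnem) (pne2 hjnep) (pne2 hjmp)] at hS
        have e0 : f (i, j) = a := by rw [hfval, if_neg (by omega)]
        have e1 : f (i+1, j) = a := by rw [hfval, if_neg (by omega)]
        have e2 : f (i-1, j) = a := by rw [hfval, if_neg (by omega)]
        have e3 : f (i, jm) = if j.val - 1 = 0 ∨ j.val - 1 = n - 1 then b else a := hfval i jm
        have e4 : f (i, jp) = if j.val + 1 = 0 ∨ j.val + 1 = n - 1 then b else a := hfval i jp
        rw [e0, e3, e4] at hS
        have : k + 4 ≤ a + a + a + (if j.val - 1 = 0 ∨ j.val - 1 = n - 1 then b else a) +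
            (if j.val + 1 = 0 ∨ j.val + 1 = n - 1 then b else a) := by
          split_ifs <;> omega
        omega
  -- the weight of f
  have hsum : ∑ v, f v = 7 * (n - 2) * a + 14 * b := by
    rw [Fintype.sum_prod_type]
    have hrow : ∀ i : Fin 7, ∑ j : Fin n, f (i, j) = 2 * b + (n - 2) * a := by
      intro i
      have : ∀ j : Fin n, f (i, j) = if j.val = 0 ∨ j.val = n - 1 then b else a := fun j => rfl
      simp only [this]
      rw [Finset.sum_ite]
      have hfil : Finset.univ.filter (fun j : Fin n => j.val = 0 ∨ j.val = n - 1) =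
          ({⟨0, by omega⟩, ⟨n-1, by omega⟩} : Finset (Fin n)) := by
        ext j
        simp [Fin.ext_iff]
      have hcard1 : (Finset.univ.filter (fun j : Fin n => j.val = 0 ∨ j.val = n - 1)).card = 2 := by
        rw [hfil]
        rw [Finset.card_insert_of_notMem (by simp [Fin.ext_iff]; omega), Finset.card_singleton]
      have hcard2 : (Finset.univ.filter
          (fun j : Fin n => ¬(j.val = 0 ∨ j.val = n - 1))).card = n - 2 := by
        have := Finset.card_filter_add_card_filter_not
          (s := (Finset.univ : Finset (Fin n)))
          (p := fun j : Fin n => j.val = 0 ∨ j.val = n - 1)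
        simp only [Finset.card_univ, Fintype.card_fin] at this
        omega
      rw [Finset.sum_const, Finset.sum_const, hcard1, hcard2]
      simp [mul_comm]
    rw [Finset.sum_congr rfl (fun i _ => hrow i), Finset.sum_const]
    simp only [Finset.card_univ, Fintype.card_fin, smul_eq_mul]
    ring
  calc gammaKR k (cylinder 7 n) ≤ ∑ v, f v :=
        Nat.sInf_le ⟨f, ⟨hcond1, hcond2⟩, rfl⟩
    _ = 7 * (n - 2) * a + 14 * b := hsum
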